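/- arXiv:1710.11268 — 2 statements merged into one kernel-verified Lean document; each statement's English description precedes it below -/
import Mathlib

section
/- Fix a constant c₀ ∈ (0,1). There exists a constant c ∈ (0, 1/2) such that for all p, q with 0 < c₀·p < q < p ≤ 1/2 and p − q ≥ q/10, the quantity λ = log((1-q)/(1-p)) / log(p(1-q)/(q(1-p))) satisfies (λ − q)/(p − q) ≥ c. -/
/-!
Write `λ = N / (L + N)` with `N = log ((1 - q) / (1 - p))` and `L = log (p / q)`. The elementary
bounds `1 - y⁻¹ ≤ log y ≤ y - 1` and `log x ≤ sinh (log x) = (x - x⁻¹) / 2` (for `x ≥ 1`) give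
`(1 - q) N - q L ≥ (p - q)² / (2p)` and `L + N ≤ (p - q) (p + 3q) / (2pq)`, hence
`λ - q = ((1 - q) N - q L) / (L + N) ≥ (p - q) q / (p + 3q)`. Finally `q / (p + 3q) ≥ c₀ / (1 + 3c₀)`
because `q > c₀ p`.
-/

open Real

namespace Real

lemma log_le_half_sub_inv {x : ℝ} (hx : 1 ≤ x) : log x ≤ (x - x⁻¹) / 2 := by
  rw [← sinh_log (by linarith)]
  exact self_le_sinh_iff.mpr (log_nonneg hx)

lemma log_div_le_sub_mul_add_div {p q : ℝ} (hq : 0 < q) (hqp : q ≤ p) :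
    log (p / q) ≤ (p - q) * (p + q) / (2 * p * q) := by
  have hp : 0 < p := hq.trans_le hqp
  calc log (p / q) ≤ (p / q - (p / q)⁻¹) / 2 := log_le_half_sub_inv ((one_le_div hq).mpr hqp)
    _ = (p - q) * (p + q) / (2 * p * q) := by field_simp; ring

lemma sub_div_le_log_div {x y : ℝ} (hx : 0 < x) (hy : 0 < y) : (x - y) / x ≤ log (x / y) := by
  calc (x - y) / x = 1 - (x / y)⁻¹ := by field_simp
    _ ≤ log (x / y) := one_sub_inv_le_log_of_pos (by positivity)

lemma log_div_le_sub_div {x y : ℝ} (hx : 0 < x) (hy : 0 < y) : log (x / y) ≤ (x - y) / y := by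
  calc log (x / y) ≤ x / y - 1 := log_le_sub_one_of_pos (by positivity)
    _ = (x - y) / y := by field_simp

end Real

/-- The likelihood threshold `λ` of the stochastic block model with edge probabilities `p` and `q`:
the edge density at which `Bernoulli p` and `Bernoulli q` have equal likelihood. -/
noncomputable def sbmThreshold (p q : ℝ) : ℝ :=
  log ((1 - q) / (1 - p)) / log (p * (1 - q) / (q * (1 - p)))

section

variable {p q : ℝ}

lemma sbmThreshold_eq_div_log_add (hq : 0 < q) (hqp : q < p) (hp : p < 1) :
    sbmThreshold p q = log ((1 - q) / (1 - p)) / (log (p / q) + log ((1 - q) / (1 - p))) := by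
  have hp0 : 0 < p := hq.trans hqp
  have h1q : 0 < 1 - q := by linarith
  have h1p : 0 < 1 - p := by linarith
  rw [sbmThreshold, mul_div_mul_comm, log_mul (by positivity) (by positivity)]

lemma le_sbmThreshold_sub (hq : 0 < q) (hqp : q < p) (hp : p ≤ 1 / 2) :
    (p - q) * (q / (p + 3 * q)) ≤ sbmThreshold p q - q := by
  have hp0 : 0 < p := hq.trans hqp
  rw [sbmThreshold_eq_div_log_add hq hqp (by linarith)]
  set N := log ((1 - q) / (1 - p))
  set L := log (p / q)
  have hN_ge : (p - q) / (1 - q) ≤ N := by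
    simpa using sub_div_le_log_div (x := 1 - q) (y := 1 - p) (by linarith) (by linarith)
  have hN_le : N ≤ (p - q) / (1 - p) := by
    simpa using log_div_le_sub_div (x := 1 - q) (y := 1 - p) (by linarith) (by linarith)
  have hL_le : L ≤ (p - q) * (p + q) / (2 * p * q) := log_div_le_sub_mul_add_div hq hqp.le
  have hL_nonneg : 0 ≤ L := log_nonneg ((one_le_div hq).mpr hqp.le)
  have hN_pos : 0 < N := lt_of_lt_of_le (div_pos (by linarith) (by linarith)) hN_ge
  have hgap : (p - q) ^ 2 / (2 * p) ≤ (1 - q) * N - q * L := by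
    have h1 : p - q ≤ (1 - q) * N := by
      rwa [div_le_iff₀' (by linarith)] at hN_ge
    have h2 : q * L ≤ (p - q) * (p + q) / (2 * p) := by
      rw [le_div_iff₀ (by positivity)] at hL_le ⊢
      linarith
    have h3 : (p - q) ^ 2 / (2 * p) = (p - q) - (p - q) * (p + q) / (2 * p) := by
      field_simp; ring
    linarith
  -- `4pq ≤ 2q` absorbs the bound `N ≤ 2 (p - q)` into the bound on `L`.
  have hsum : L + N ≤ (p - q) * (p + 3 * q) / (2 * p * q) := by
    have hN2 : N ≤ 2 * (p - q) := hN_le.trans <| by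
      rw [div_le_iff₀ (by linarith)]; nlinarith
    have h : (p - q) * (p + q) / (2 * p * q) + 2 * (p - q) ≤ (p - q) * (p + 3 * q) / (2 * p * q) := by
      rw [div_add' _ _ _ (by positivity), div_le_div_iff_of_pos_right (by positivity)]
      nlinarith [mul_pos (sub_pos.mpr hqp) hq]
    linarith
  rw [le_sub_iff_add_le, le_div_iff₀ (by linarith), add_mul]
  calc (p - q) * (q / (p + 3 * q)) * (L + N) + q * (L + N)
      ≤ (p - q) * (q / (p + 3 * q)) * ((p - q) * (p + 3 * q) / (2 * p * q)) + q * (L + N) := by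
        gcongr
    _ = (p - q) ^ 2 / (2 * p) + q * (L + N) := by field_simp
    _ ≤ N := by linarith

end

theorem lambda_ratio_lower_bound_general (c₀ : ℝ) (hc₀0 : 0 < c₀) :
    ∃ c : ℝ, 0 < c ∧ c < 1/2 ∧
      ∀ p q : ℝ, 0 < c₀ * p → c₀ * p < q → q < p → p ≤ 1/2 → q / 10 ≤ p - q →
        c ≤ (Real.log ((1 - q) / (1 - p)) / Real.log (p * (1 - q) / (q * (1 - p))) - q)
              / (p - q) := by
  refine ⟨c₀ / (1 + 3 * c₀), by positivity, ?_, fun p q hc₀p hq hqp hp _ => ?_⟩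
  · rw [div_lt_iff₀ (by positivity)]
    linarith
  have hq0 : 0 < q := hc₀p.trans hq
  have hc_le : c₀ / (1 + 3 * c₀) ≤ q / (p + 3 * q) := by
    rw [div_le_div_iff₀ (by positivity) (by linarith)]
    linarith
  rw [le_div_iff₀ (sub_pos.mpr hqp)]
  calc c₀ / (1 + 3 * c₀) * (p - q) ≤ (p - q) * (q / (p + 3 * q)) := by
        rw [mul_comm]; exact mul_le_mul_of_nonneg_left hc_le (by linarith)
    _ ≤ sbmThreshold p q - q := le_sbmThreshold_sub hq0 hqp hp

/-- Fix `c₀ ∈ (0,1)`. There exists `c ∈ (0, 1/2)` such that for all `p, q` with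
`0 < c₀ p < q < p ≤ 1/2` and `p − q ≥ q/10`, the threshold
`λ = log((1-q)/(1-p)) / log(p(1-q)/(q(1-p)))` satisfies `(λ − q)/(p − q) ≥ c`. -/
theorem lambda_ratio_lower_bound (c₀ : ℝ) (hc₀0 : 0 < c₀) (hc₀1 : c₀ < 1) :
    ∃ c : ℝ, 0 < c ∧ c < 1/2 ∧
      ∀ p q : ℝ, 0 < c₀ * p → c₀ * p < q → q < p → p ≤ 1/2 → q / 10 ≤ p - q →
        c ≤ (Real.log ((1 - q) / (1 - p)) / Real.log (p * (1 - q) / (q * (1 - p))) - q)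
              / (p - q) :=
  lambda_ratio_lower_bound_general c₀ hc₀0
end

section
/- Let A ∈ {0,1}^{n×n} be symmetric with zero diagonal and independent Bernoulli above-diagonal entries, and let p ≥ max_{i,j} E A_{i,j}. Define S = {i : Σ_j A_{i,j} ≥ 20np} and Z_i = (Σ_j |A_{i,j} − E A_{i,j}|)·𝟙{i ∈ S}. Then E Z_i ≤ 20np·exp(−10np) for each i, and with probability at least 1 − exp(−5np), Σ_i Z_i ≤ 20n²p·exp(−5np). -/
/-!
Write `Xᵢ = ∑ⱼ Aᵢⱼ` and `m = np`. Since `∑ⱼ |Aᵢⱼ - 𝔼Aᵢⱼ| ≤ Xᵢ + m`, we have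
`Zᵢ ≤ (Xᵢ + m) 𝟙{Xᵢ ≥ 20m}`. The off-diagonal entries of row `i` are independent Bernoulli
variables, so `𝔼 e^{tXᵢ} ≤ exp ((eᵗ - 1) m)` for `t ≥ 0`. If `m ≤ 1/10`, simply
`𝔼Zᵢ ≤ 𝔼Xᵢ + m ≤ 2m ≤ 20m e^{-10m}`. Otherwise `(Xᵢ + m) 𝟙{Xᵢ ≥ 20m} ≤ 2 e^{2Xᵢ - 20m}`, and the
moment generating function at `t = 2` gives `𝔼Zᵢ ≤ 2 e^{(e² - 21) m} ≤ 20m e^{-10m}`.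
Markov's inequality for `∑ᵢ Zᵢ` at level `20n²p e^{-5m}` gives the second claim.
-/

open MeasureTheory ProbabilityTheory Real

theorem exp_two_lt_nine : exp 2 < 9 := by
  have := exp_one_lt_three
  rw [show (2 : ℝ) = 1 + 1 by norm_num, exp_add]
  nlinarith [exp_pos 1]

theorem add_le_two_mul_exp {x m : ℝ} (hm : 0 ≤ m) (hx : 20 * m ≤ x) :
    x + m ≤ 2 * exp (-20 * m) * exp (2 * x) := by
  have h1 : x ≤ exp x := by linarith [add_one_le_exp x]
  have h2 : 1 ≤ exp (x - 20 * m) := one_le_exp (by linarith)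
  calc x + m ≤ 2 * exp x * 1 := by linarith
    _ ≤ 2 * exp x * exp (x - 20 * m) := by gcongr
    _ = 2 * exp (-20 * m) * exp (2 * x) := by
        rw [mul_assoc, mul_assoc, ← exp_add, ← exp_add]; ring_nf

theorem mem_Icc_of_eq_zero_or_eq_one {x : ℝ} (h : x = 0 ∨ x = 1) : x ∈ Set.Icc (0 : ℝ) 1 := by
  rcases h with rfl | rfl <;> simp

theorem sum_abs_sub_mul_ite_le {ι : Type*} (s : Finset ι) {a q : ι → ℝ}
    (ha : ∀ j ∈ s, 0 ≤ a j) (hq : ∀ j ∈ s, 0 ≤ q j) {c m : ℝ} (hqm : ∑ j ∈ s, q j ≤ m) :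
    (∑ j ∈ s, |a j - q j|) * (if c ≤ ∑ j ∈ s, a j then 1 else 0)
      ≤ if c ≤ ∑ j ∈ s, a j then ∑ j ∈ s, a j + m else 0 := by
  have hsum : ∑ j ∈ s, |a j - q j| ≤ ∑ j ∈ s, a j + ∑ j ∈ s, q j := by
    rw [← Finset.sum_add_distrib]
    gcongr with j hj
    rw [abs_sub_le_iff]
    constructor <;> linarith [ha j hj, hq j hj]
  split_ifs <;> linarith

theorem sum_subtype_ne_eq_sum {ι M : Type*} [Fintype ι] [DecidableEq ι] [AddCommMonoid M]
    {f : ι → M} {i : ι} (hi : f i = 0) : ∑ j : {j // j ≠ i}, f j = ∑ j, f j := by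
  rw [← Finset.sum_erase Finset.univ hi]
  exact (Finset.sum_subtype _ (by simp) f).symm

section Probability

variable {Ω : Type*} [MeasurableSpace Ω] {μ : Measure Ω}

theorem ofReal_one_sub_le_measure_le [IsProbabilityMeasure μ] {Y : Ω → ℝ} (hY : Measurable Y)
    (hYi : Integrable Y μ) (hY0 : 0 ≤ᵐ[μ] Y) {T δ : ℝ} (hT : 0 < T) (hmean : μ[Y] ≤ T * δ) :
    ENNReal.ofReal (1 - δ) ≤ μ {ω | Y ω ≤ T} := by
  have hmarkov : T * μ.real {ω | T ≤ Y ω} ≤ T * δ :=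
    (mul_meas_ge_le_integral_of_nonneg hY0 hYi T).trans hmean
  have htail : μ.real {ω | T < Y ω} ≤ δ :=
    (measureReal_mono fun ω (h : T < Y ω) => h.le).trans (le_of_mul_le_mul_left hmarkov hT)
  have hcompl : {ω | Y ω ≤ T} = {ω | T < Y ω}ᶜ := by ext; simp
  rw [← ofReal_measureReal, hcompl,
    probReal_compl_eq_one_sub (measurableSet_lt measurable_const hY)]
  exact ENNReal.ofReal_le_ofReal (by linarith)

theorem mgf_le_exp_of_zero_or_one [IsProbabilityMeasure μ] {X : Ω → ℝ} (hX : Measurable X)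
    (hbin : ∀ ω, X ω = 0 ∨ X ω = 1) {q t : ℝ} (hq : μ[X] ≤ q) (ht : 0 ≤ t) :
    mgf X μ t ≤ exp ((exp t - 1) * q) := by
  have hexp : ∀ ω, exp (t * X ω) = 1 + (exp t - 1) * X ω := fun ω => by
    rcases hbin ω with h | h <;> simp [h]
  have hint : Integrable X μ :=
    .of_mem_Icc 0 1 hX.aemeasurable (ae_of_all _ fun ω => mem_Icc_of_eq_zero_or_eq_one (hbin ω))
  calc mgf X μ t = 1 + (exp t - 1) * μ[X] := by
        simp only [mgf, hexp]
        rw [integral_add (integrable_const 1) (hint.const_mul _), integral_const_mul]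
        simp
    _ ≤ 1 + (exp t - 1) * q := by gcongr; exact sub_nonneg.2 (one_le_exp ht)
    _ ≤ exp ((exp t - 1) * q) := by linarith [add_one_le_exp ((exp t - 1) * q)]

theorem mgf_sum_le_exp_of_zero_or_one {ι : Type*} [Fintype ι] {X : ι → Ω → ℝ}
    (hind : iIndepFun X μ) (hX : ∀ j, Measurable (X j)) (hbin : ∀ j ω, X j ω = 0 ∨ X j ω = 1)
    {q : ι → ℝ} (hq : ∀ j, μ[X j] ≤ q j) {t : ℝ} (ht : 0 ≤ t) :
    mgf (∑ j, X j) μ t ≤ exp ((exp t - 1) * ∑ j, q j) := by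
  have := hind.isProbabilityMeasure
  rw [hind.mgf_sum hX, Finset.mul_sum, Real.exp_sum]
  exact Finset.prod_le_prod (fun j _ => mgf_nonneg) fun j _ =>
    mgf_le_exp_of_zero_or_one (hX j) (hbin j) (hq j) ht

theorem integral_indicator_add_le [IsProbabilityMeasure μ] {X : Ω → ℝ} {m : ℝ}
    (hX : Measurable X) (hX0 : ∀ ω, 0 ≤ X ω) (hXi : Integrable X μ)
    (hexp : Integrable (fun ω => exp (2 * X ω)) μ) (hm : 0 ≤ m) (hmean : μ[X] ≤ m)
    (hmgf : mgf X μ 2 ≤ exp ((exp 2 - 1) * m)) :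
    ∫ ω, {ω | 20 * m ≤ X ω}.indicator (fun ω => X ω + m) ω ∂μ ≤ 20 * m * exp (-10 * m) := by
  have hW : Integrable ({ω | 20 * m ≤ X ω}.indicator fun ω => X ω + m) μ :=
    (hXi.add (integrable_const m)).indicator (measurableSet_le measurable_const hX)
  by_cases hsmall : m ≤ 1 / 10
  · have hexp_ge : 1 / 10 ≤ exp (-10 * m) := by
      calc (1 : ℝ) / 10 ≤ exp (-1) := by
            rw [exp_neg, one_div]; gcongr; linarith [exp_one_lt_three]
        _ ≤ exp (-10 * m) := by gcongr; linarith
    calc ∫ ω, {ω | 20 * m ≤ X ω}.indicator (fun ω => X ω + m) ω ∂μ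
        ≤ ∫ ω, X ω + m ∂μ :=
          integral_mono hW (hXi.add (integrable_const m))
            (Set.indicator_le_self' fun ω _ => by linarith [hX0 ω])
      _ = μ[X] + m := by rw [integral_add hXi (integrable_const m)]; simp
      _ ≤ 20 * m * exp (-10 * m) := by nlinarith
  · rw [not_le] at hsmall
    have hbound : ∀ ω, {ω | 20 * m ≤ X ω}.indicator (fun ω => X ω + m) ω
        ≤ 2 * exp (-20 * m) * exp (2 * X ω) := fun ω => by
      by_cases h : 20 * m ≤ X ω
      · simpa [h] using add_le_two_mul_exp hm h
      · simp only [Set.indicator_of_notMem (show ω ∉ {ω | 20 * m ≤ X ω} from h)]; positivity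
    calc ∫ ω, {ω | 20 * m ≤ X ω}.indicator (fun ω => X ω + m) ω ∂μ
        ≤ ∫ ω, 2 * exp (-20 * m) * exp (2 * X ω) ∂μ :=
          integral_mono hW (hexp.const_mul _) hbound
      _ = 2 * exp (-20 * m) * mgf X μ 2 := integral_const_mul _ _
      _ ≤ 2 * exp (-20 * m) * exp ((exp 2 - 1) * m) := by gcongr
      _ ≤ 2 * exp (-10 * m) := by
          rw [mul_assoc, ← exp_add]; gcongr; nlinarith [exp_two_lt_nine]
      _ ≤ 20 * m * exp (-10 * m) := by gcongr; linarith

end Probability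

section SymmetricRandomMatrix

variable {Ω : Type*} [MeasurableSpace Ω] {μ : Measure Ω} {n : ℕ} {A : Ω → Fin n → Fin n → ℝ}

theorem sum_integral_row_le {p : ℝ} (hp : ∀ i j, ∫ ω, A ω i j ∂μ ≤ p) (i : Fin n) :
    ∑ j, ∫ ω, A ω i j ∂μ ≤ n * p := by
  simpa using Finset.sum_le_sum fun j (_ : j ∈ Finset.univ) => hp i j

theorem iIndepFun_row (hsymm : ∀ ω i j, A ω i j = A ω j i)
    (hindep : iIndepFun
      (fun (ij : {q : Fin n × Fin n // q.1 < q.2}) ω => A ω ij.1.1 ij.1.2) μ)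
    (i : Fin n) : iIndepFun (fun (j : {j // j ≠ i}) ω => A ω i j) μ := by
  have hinj : Function.Injective fun j : {j // j ≠ i} =>
      (⟨(min i j, max i j), min_lt_max.2 j.2.symm⟩ : {q : Fin n × Fin n // q.1 < q.2}) := by
    intro j k hjk
    simp only [Subtype.mk.injEq, Prod.mk.injEq] at hjk
    ext
    grind
  convert hindep.precomp hinj using 2 with j
  funext ω
  rcases le_total i j with h | h
  · simp [min_eq_left h, max_eq_right h]
  · simp [min_eq_right h, max_eq_left h, hsymm ω i]

theorem mgf_sum_row_le (hmeas : ∀ i j, Measurable fun ω => A ω i j)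
    (hsymm : ∀ ω i j, A ω i j = A ω j i) (hdiag : ∀ ω i, A ω i i = 0)
    (hbin : ∀ ω i j, A ω i j = 0 ∨ A ω i j = 1)
    (hindep : iIndepFun
      (fun (ij : {q : Fin n × Fin n // q.1 < q.2}) ω => A ω ij.1.1 ij.1.2) μ)
    {p : ℝ} (hp : ∀ i j, ∫ ω, A ω i j ∂μ ≤ p) (i : Fin n) {t : ℝ} (ht : 0 ≤ t) :
    mgf (fun ω => ∑ j, A ω i j) μ t ≤ exp ((exp t - 1) * (n * p)) := by
  have hrow : (fun ω => ∑ j, A ω i j) = ∑ j : {j // j ≠ i}, fun ω => A ω i j := by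
    funext ω
    rw [Finset.sum_apply, sum_subtype_ne_eq_sum (hdiag ω i)]
  have hmean : ∑ j : {j // j ≠ i}, ∫ ω, A ω i j ∂μ ≤ n * p := by
    rw [sum_subtype_ne_eq_sum (f := fun j => ∫ ω, A ω i j ∂μ) (i := i) (by simp [hdiag])]
    exact sum_integral_row_le hp i
  rw [hrow]
  calc _ ≤ exp ((exp t - 1) * ∑ j : {j // j ≠ i}, ∫ ω, A ω i j ∂μ) :=
        mgf_sum_le_exp_of_zero_or_one (iIndepFun_row hsymm hindep i) (fun j => hmeas i j)
          (fun j ω => hbin ω i j) (fun j => le_rfl) ht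
    _ ≤ exp ((exp t - 1) * (n * p)) := by gcongr; exact sub_nonneg.2 (one_le_exp ht)

noncomputable def truncatedRowSum (A : Ω → Fin n → Fin n → ℝ) (p : ℝ) (i : Fin n) : Ω → ℝ :=
  {ω | 20 * (n * p) ≤ ∑ j, A ω i j}.indicator fun ω => ∑ j, A ω i j + n * p

theorem integrable_entry [IsFiniteMeasure μ] (hmeas : ∀ i j, Measurable fun ω => A ω i j)
    (hbin : ∀ ω i j, A ω i j = 0 ∨ A ω i j = 1) (i j : Fin n) :
    Integrable (fun ω => A ω i j) μ :=
  .of_mem_Icc 0 1 (hmeas i j).aemeasurable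
    (ae_of_all _ fun ω => mem_Icc_of_eq_zero_or_eq_one (hbin ω i j))

theorem integrable_truncatedRowSum [IsFiniteMeasure μ]
    (hmeas : ∀ i j, Measurable fun ω => A ω i j) (hbin : ∀ ω i j, A ω i j = 0 ∨ A ω i j = 1)
    (p : ℝ) (i : Fin n) : Integrable (truncatedRowSum A p i) μ :=
  ((integrable_finsetSum _ fun j _ => integrable_entry hmeas hbin i j).add
    (integrable_const _)).indicator (measurableSet_le measurable_const (by fun_prop))

theorem integral_truncatedRowSum_le [IsProbabilityMeasure μ]
    (hmeas : ∀ i j, Measurable fun ω => A ω i j)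
    (hsymm : ∀ ω i j, A ω i j = A ω j i) (hdiag : ∀ ω i, A ω i i = 0)
    (hbin : ∀ ω i j, A ω i j = 0 ∨ A ω i j = 1)
    (hindep : iIndepFun
      (fun (ij : {q : Fin n × Fin n // q.1 < q.2}) ω => A ω ij.1.1 ij.1.2) μ)
    {p : ℝ} (hp0 : 0 ≤ p) (hp : ∀ i j, ∫ ω, A ω i j ∂μ ≤ p) (i : Fin n) :
    ∫ ω, truncatedRowSum A p i ω ∂μ ≤ 20 * (n * p) * exp (-10 * (n * p)) := by
  have hA : ∀ ω j, A ω i j ∈ Set.Icc (0 : ℝ) 1 := fun ω j =>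
    mem_Icc_of_eq_zero_or_eq_one (hbin ω i j)
  have hle : ∀ ω, ∑ j, A ω i j ≤ n := fun ω =>
    (Finset.sum_le_sum fun j _ => (hA ω j).2).trans (by simp)
  refine integral_indicator_add_le (by fun_prop)
    (fun ω => Finset.sum_nonneg fun j _ => (hA ω j).1)
    (integrable_finsetSum _ fun j _ => integrable_entry hmeas hbin i j)
    (integrable_exp_mul_of_le 2 n zero_le_two (by fun_prop) (ae_of_all _ hle)) (by positivity) ?_
    (mgf_sum_row_le hmeas hsymm hdiag hbin hindep hp i zero_le_two)
  rw [integral_finsetSum _ fun j _ => integrable_entry hmeas hbin i j]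
  exact sum_integral_row_le hp i

noncomputable def truncatedDeviation (μ : Measure Ω) (A : Ω → Fin n → Fin n → ℝ) (p : ℝ)
    (i : Fin n) (ω : Ω) : ℝ :=
  (∑ j, |A ω i j - ∫ ω', A ω' i j ∂μ|) * (if 20 * (n : ℝ) * p ≤ ∑ j, A ω i j then 1 else 0)

theorem truncatedDeviation_mem_Icc (hbin : ∀ ω i j, A ω i j = 0 ∨ A ω i j = 1) {p : ℝ}
    (hp : ∀ i j, ∫ ω, A ω i j ∂μ ≤ p) (i : Fin n) (ω : Ω) :
    truncatedDeviation μ A p i ω ∈ Set.Icc 0 (truncatedRowSum A p i ω) := by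
  have hA : ∀ ω j, 0 ≤ A ω i j := fun ω j => (mem_Icc_of_eq_zero_or_eq_one (hbin ω i j)).1
  have hle := sum_abs_sub_mul_ite_le Finset.univ (fun j _ => hA ω j)
    (fun j _ => integral_nonneg (hA · j)) (c := 20 * (n * p)) (sum_integral_row_le hp i)
  simp only [truncatedDeviation, truncatedRowSum, Set.indicator_apply, Set.mem_ofPred_eq,
    mul_assoc]
  exact ⟨by positivity, hle⟩

theorem measurable_truncatedDeviation (hmeas : ∀ i j, Measurable fun ω => A ω i j) (p : ℝ)
    (i : Fin n) : Measurable (truncatedDeviation μ A p i) :=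
  (by fun_prop : Measurable fun ω => ∑ j, |A ω i j - ∫ ω', A ω' i j ∂μ|).mul
    (Measurable.ite (measurableSet_le measurable_const (by fun_prop)) measurable_const
      measurable_const)

theorem integrable_truncatedDeviation [IsFiniteMeasure μ]
    (hmeas : ∀ i j, Measurable fun ω => A ω i j) (hbin : ∀ ω i j, A ω i j = 0 ∨ A ω i j = 1)
    {p : ℝ} (hp : ∀ i j, ∫ ω, A ω i j ∂μ ≤ p) (i : Fin n) :
    Integrable (truncatedDeviation μ A p i) μ :=
  (integrable_truncatedRowSum hmeas hbin p i).mono'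
    (measurable_truncatedDeviation hmeas p i).aestronglyMeasurable <| ae_of_all _ fun ω => by
      have h := truncatedDeviation_mem_Icc hbin hp i ω
      rw [Real.norm_of_nonneg h.1]
      exact h.2

theorem integral_truncatedDeviation_le [IsProbabilityMeasure μ]
    (hmeas : ∀ i j, Measurable fun ω => A ω i j)
    (hsymm : ∀ ω i j, A ω i j = A ω j i) (hdiag : ∀ ω i, A ω i i = 0)
    (hbin : ∀ ω i j, A ω i j = 0 ∨ A ω i j = 1)
    (hindep : iIndepFun
      (fun (ij : {q : Fin n × Fin n // q.1 < q.2}) ω => A ω ij.1.1 ij.1.2) μ)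
    {p : ℝ} (hp0 : 0 ≤ p) (hp : ∀ i j, ∫ ω, A ω i j ∂μ ≤ p) (i : Fin n) :
    ∫ ω, truncatedDeviation μ A p i ω ∂μ ≤ 20 * (n * p) * exp (-10 * (n * p)) :=
  (integral_mono (integrable_truncatedDeviation hmeas hbin hp i)
    (integrable_truncatedRowSum hmeas hbin p i)
    fun ω => (truncatedDeviation_mem_Icc hbin hp i ω).2).trans
    (integral_truncatedRowSum_le hmeas hsymm hdiag hbin hindep hp0 hp i)

end SymmetricRandomMatrix

/-- For a symmetric binary random matrix `A` with zero diagonal and independent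
Bernoulli above-diagonal entries, `p ≥ max_{i,j} 𝔼A_{i,j}`, `S = {i : ∑ⱼ A_{i,j} ≥ 20np}`
and `Zᵢ = (∑ⱼ |A_{i,j} − 𝔼A_{i,j}|) 𝟙{i ∈ S}`: each `𝔼Zᵢ ≤ 20np e^{−10np}`, and with
probability at least `1 − e^{−5np}`, `∑ᵢ Zᵢ ≤ 20n²p e^{−5np}`. -/
theorem truncated_degree_bound (n : ℕ) (hn : 1 ≤ n)
    {Ω : Type*} [MeasureSpace Ω] [IsProbabilityMeasure (ℙ : Measure Ω)]
    (A : Ω → Fin n → Fin n → ℝ)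
    (hmeas : ∀ i j, Measurable fun ω => A ω i j)
    (hsymm : ∀ ω i j, A ω i j = A ω j i)
    (hdiag : ∀ ω i, A ω i i = 0)
    (hbin : ∀ ω i j, A ω i j = 0 ∨ A ω i j = 1)
    (hindep : iIndepFun
      (fun (ij : {q : Fin n × Fin n // q.1 < q.2}) ω => A ω ij.1.1 ij.1.2) ℙ)
    (p : ℝ) (hp0 : 0 < p) (hp : ∀ i j, (∫ ω, A ω i j) ≤ p)
    (Zf : Ω → Fin n → ℝ)
    (hZf : ∀ ω i, Zf ω i = (∑ j, |A ω i j - ∫ ω', A ω' i j|) *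
      (if 20 * (n : ℝ) * p ≤ ∑ j, A ω i j then 1 else 0)) :
    (∀ i, (∫ ω, Zf ω i) ≤ 20 * n * p * Real.exp (-10 * n * p)) ∧
    ENNReal.ofReal (1 - Real.exp (-5 * n * p)) ≤
      ℙ {ω | ∑ i, Zf ω i ≤ 20 * (n : ℝ) ^ 2 * p * Real.exp (-5 * n * p)} := by
  have hn0 : (0 : ℝ) < n := by exact_mod_cast hn
  have hZ : ∀ i, (fun ω => Zf ω i) = truncatedDeviation ℙ A p i := fun i => funext (hZf · i)
  have hZint : ∀ i, Integrable (fun ω => Zf ω i) :=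
    fun i => hZ i ▸ integrable_truncatedDeviation hmeas hbin hp i
  have hEZ : ∀ i, ∫ ω, Zf ω i ≤ 20 * (n * p) * exp (-10 * (n * p)) :=
    fun i => hZ i ▸ integral_truncatedDeviation_le hmeas hsymm hdiag hbin hindep hp0.le hp i
  refine ⟨fun i => by simpa only [mul_assoc] using hEZ i, ?_⟩
  refine ofReal_one_sub_le_measure_le
    (Finset.measurable_sum _ fun i _ => hZ i ▸ measurable_truncatedDeviation hmeas p i)
    (integrable_finsetSum _ fun i _ => hZint i)
    (ae_of_all _ fun ω => Finset.sum_nonneg fun i _ =>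
      hZf ω i ▸ (truncatedDeviation_mem_Icc hbin hp i ω).1) (by positivity) ?_
  calc ∫ ω, ∑ i, Zf ω i = ∑ i, ∫ ω, Zf ω i := integral_finsetSum _ fun i _ => hZint i
    _ ≤ ∑ _i : Fin n, 20 * (n * p) * exp (-10 * (n * p)) := Finset.sum_le_sum fun i _ => hEZ i
    _ = 20 * (n : ℝ) ^ 2 * p * exp (-5 * n * p) * exp (-5 * n * p) := by
      rw [mul_assoc _ (exp _), ← exp_add, Finset.sum_const, Finset.card_univ, Fintype.card_fin,
        nsmul_eq_mul]
      ring_nf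
end
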